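/- arXiv:1104.0034 — 2 statements merged into one kernel-verified Lean document; each statement's English description precedes it below -/
import Mathlib

section
/- The Julia set of the exponential map exp:ℂ→ℂ is the entire complex plane: the Fatou set F(exp) is empty, i.e. there is no point of ℂ having a neighborhood on which the family of iterates (expⁿ)_{n≥0} is equicontinuous with respect to the spherical metric. -/
/-!
Formalization of: "Absence of wandering domains for functions in class B whose
singular values escape uniformly, under a thickness condition along an invariant set A."
-/

open Set Metric Filter Topology

/-- The chordal (spherical) distance between two finite points of the Riemann sphere. -/
noncomputable def sphericalDist (z w : ℂ) : ℝ :=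
  2 * dist z w / (Real.sqrt (1 + ‖z‖ ^ 2) * Real.sqrt (1 + ‖w‖ ^ 2))

/-- A transcendental entire function: entire and not a polynomial. -/
def TranscendentalEntire (f : ℂ → ℂ) : Prop :=
  Differentiable ℂ f ∧ ¬∃ p : Polynomial ℂ, ∀ z : ℂ, f z = p.eval z

/-- `S` is the set of singular values of `f`: the smallest closed set `S ⊆ ℂ` such that
`f : ℂ ∖ f⁻¹(S) → ℂ ∖ S` is a covering map. -/
def IsSingularValueSet (f : ℂ → ℂ) (S : Set ℂ) : Prop :=
  IsClosed S ∧ IsCoveringMapOn f Sᶜ ∧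
    ∀ T : Set ℂ, IsClosed T → IsCoveringMapOn f Tᶜ → S ⊆ T

/-- The Fatou set of an entire function: points having a neighbourhood on which the family of
iterates is equicontinuous with respect to the spherical metric. -/
def FatouSet (f : ℂ → ℂ) : Set ℂ :=
  {z : ℂ | ∃ N : Set ℂ, IsOpen N ∧ z ∈ N ∧
    ∀ x ∈ N, ∀ ε > (0 : ℝ), ∃ δ > (0 : ℝ), ∀ y ∈ N, dist y x < δ →
      ∀ n : ℕ, sphericalDist (f^[n] y) (f^[n] x) < ε}

/-- A wandering domain: a connected component `W` of the Fatou set whose forward images are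
pairwise disjoint. -/
def IsWanderingDomain (f : ℂ → ℂ) (W : Set ℂ) : Prop :=
  (∃ z ∈ FatouSet f, W = connectedComponentIn (FatouSet f) z) ∧
    ∀ m n : ℕ, m ≠ n → f^[m] '' W ∩ f^[n] '' W = ∅


namespace MisiurewiczAux

/-- derivative of the m-th iterate of exp -/
lemma hasDerivAt_iter_exp (m : ℕ) (z : ℂ) :
    HasDerivAt (Complex.exp^[m])
      (∏ j ∈ Finset.range m, Complex.exp (Complex.exp^[j] z)) z := by
  induction m with
  | zero => simpa using hasDerivAt_id z
  | succ m ih =>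
    have h1 : HasDerivAt Complex.exp (Complex.exp (Complex.exp^[m] z)) (Complex.exp^[m] z) :=
      Complex.hasDerivAt_exp _
    have h2 := h1.comp z ih
    rw [Function.iterate_succ', Finset.prod_range_succ, mul_comm]
    exact h2

lemma diff_iter (m : ℕ) : Differentiable ℂ (Complex.exp^[m]) :=
  Complex.differentiable_exp.iterate m

/-- Schwarz lemma for maps into the upper half plane -/
lemma schwarz_halfplane {F : ℂ → ℂ} (hF : Differentiable ℂ F) {z₀ : ℂ} {r : ℝ} (hr : 0 < r)
    (hmaps : ∀ w ∈ ball z₀ r, 0 < (F w).im) :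
    ‖deriv F z₀‖ * r ≤ 2 * (F z₀).im := by
  set α : ℂ := F z₀ with hα
  have hαim : 0 < α.im := hmaps z₀ (mem_ball_self hr)
  set G : ℂ → ℂ := fun w => (F w - α) / (F w - (starRingEnd ℂ) α) with hG
  have hden : ∀ w ∈ ball z₀ r, F w - (starRingEnd ℂ) α ≠ 0 := by
    intro w hw h
    have h1 : (F w - (starRingEnd ℂ) α).im = (F w).im + α.im := by
      simp [Complex.sub_im, Complex.conj_im]
    rw [h] at h1
    have := hmaps w hw
    simp at h1; linarith
  have hmapsG : MapsTo G (ball z₀ r) (ball (G z₀) 1) := by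
    intro w hw
    have hlt : Complex.normSq (F w - α) < Complex.normSq (F w - (starRingEnd ℂ) α) := by
      have h1 := hmaps w hw
      simp only [Complex.normSq_apply, Complex.sub_re, Complex.sub_im, Complex.conj_re,
        Complex.conj_im]
      nlinarith [sq_nonneg ((F w).re - α.re)]
    have habs : ‖F w - α‖ < ‖F w - (starRingEnd ℂ) α‖ := by
      have := Real.sqrt_lt_sqrt (Complex.normSq_nonneg _) hlt
      simpa [Complex.norm_def] using this
    have hG0 : G z₀ = 0 := by simp [hG, hα]
    rw [hG0, mem_ball, dist_zero_right]
    have hpos : 0 < ‖F w - (starRingEnd ℂ) α‖ :=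
      (norm_pos_iff.2 (hden w hw))
    rw [hG]
    simp only [norm_div]
    exact (div_lt_one hpos).2 habs
  have hdiffG : DifferentiableOn ℂ G (ball z₀ r) := by
    apply DifferentiableOn.div
    · exact (hF.sub_const α).differentiableOn
    · exact (hF.sub_const _).differentiableOn
    · exact hden
  have hSch := Complex.norm_deriv_le_div_of_mapsTo_ball hdiffG (hmapsG.mono_right ball_subset_closedBall) hr
  -- compute deriv G z₀
  have hd0 : F z₀ - (starRingEnd ℂ) α ≠ 0 := hden z₀ (mem_ball_self hr)
  have hGd : HasDerivAt G (deriv F z₀ / (α - (starRingEnd ℂ) α)) z₀ := by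
    have hnum : HasDerivAt (fun w => F w - α) (deriv F z₀) z₀ :=
      (hF z₀).hasDerivAt.sub_const α
    have hdenD : HasDerivAt (fun w => F w - (starRingEnd ℂ) α) (deriv F z₀) z₀ :=
      (hF z₀).hasDerivAt.sub_const _
    have key : deriv F z₀ / (α - (starRingEnd ℂ) α)
        = (deriv F z₀ * (F z₀ - (starRingEnd ℂ) α) - (F z₀ - α) * deriv F z₀)
          / (F z₀ - (starRingEnd ℂ) α) ^ 2 := by
      rw [← hα]
      have h2 : α - (starRingEnd ℂ) α ≠ 0 := hd0
      field_simp
      ring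
    rw [key]
    exact hnum.div hdenD hd0
  rw [hGd.deriv] at hSch
  have hsub : α - (starRingEnd ℂ) α = (2 * α.im : ℝ) * Complex.I := Complex.sub_conj α
  have habs2 : ‖α - (starRingEnd ℂ) α‖ = 2 * α.im := by
    rw [hsub]
    simp only [norm_mul, Complex.norm_real, Real.norm_eq_abs, Complex.norm_I, mul_one]
    rw [abs_of_pos (by norm_num : (0:ℝ) < 2), abs_of_pos hαim]
  rw [norm_div, habs2] at hSch
  rw [div_le_div_iff₀ (by positivity) hr] at hSch
  linarith [hSch]



lemma sin_cubic_bound {s : ℝ} (h0 : 0 ≤ s) (h2 : s ≤ 2) :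
    Real.sin s ≤ s * (1 - s ^ 2 / 20) := by
  have hpi3 := Real.pi_gt_three
  have hpi315 := Real.pi_lt_d2
  have hs4 : 2 / Real.pi * (s / 4) ≤ Real.sin (s / 4) :=
    Real.mul_le_sin (by linarith) (by nlinarith)
  have hid : Real.cos (s / 2) = 1 - 2 * Real.sin (s / 4) ^ 2 := by
    have h1 := Real.cos_two_mul (s / 4)
    have h2 := Real.sin_sq_add_cos_sq (s / 4)
    have h3 : 2 * (s / 4) = s / 2 := by ring
    rw [h3] at h1
    linarith
  have hq : 0 ≤ 2 / Real.pi * (s / 4) := by positivity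
  have hsin4sq : (2 / Real.pi * (s / 4)) ^ 2 ≤ Real.sin (s / 4) ^ 2 := by
    nlinarith
  have hpisq : Real.pi ^ 2 ≤ 10 := by nlinarith
  have hcos : Real.cos (s / 2) ≤ 1 - s ^ 2 / 20 := by
    rw [hid]
    have hexp : (2 / Real.pi * (s / 4)) ^ 2 = s ^ 2 / (4 * Real.pi ^ 2) := by
      field_simp; ring
    rw [hexp] at hsin4sq
    have : s ^ 2 / 40 ≤ s ^ 2 / (4 * Real.pi ^ 2) := by
      apply div_le_div_of_nonneg_left (by positivity) (by positivity)
      nlinarith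
    linarith
  have hsin2 : Real.sin (s / 2) ≤ s / 2 := Real.sin_le (by linarith)
  have hcos0 : 0 ≤ Real.cos (s / 2) := by
    apply Real.cos_nonneg_of_mem_Icc
    constructor <;> nlinarith
  have hdbl : Real.sin s = 2 * Real.sin (s / 2) * Real.cos (s / 2) := by
    have := Real.sin_two_mul (s / 2)
    have h3 : 2 * (s / 2) = s := by ring
    rw [h3] at this
    linarith
  rw [hdbl]
  nlinarith [Real.sin_le (show (0:ℝ) ≤ s/2 by linarith)]

lemma abs_sin_eq {v : ℝ} (h : |v| ≤ Real.pi) : |Real.sin v| = Real.sin |v| := by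
  rcases le_or_gt 0 v with hv | hv
  · rw [abs_of_nonneg hv, abs_of_nonneg]
    exact Real.sin_nonneg_of_nonneg_of_le_pi hv (by rwa [abs_of_nonneg hv] at h)
  · have hge : -Real.pi ≤ v := by
      rw [abs_of_neg hv] at h; linarith
    have hsin : Real.sin v ≤ 0 := Real.sin_nonpos_of_nonpos_of_neg_pi_le hv.le hge
    rw [abs_of_neg hv, abs_of_nonpos hsin, Real.sin_neg]

lemma ratio_ge {v c : ℝ} (hvsin : Real.sin v ≠ 0) (hc : 0 < c) (hc' : c ≤ 1 / 10)
    (h : c ≤ |v|) : min 2 (1 / (1 - c ^ 2 / 20)) ≤ |v| / |Real.sin v| := by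
  have hsinpos : 0 < |Real.sin v| := abs_pos.2 hvsin
  rcases le_or_gt 2 (|v|) with h2 | h2
  · refine le_trans (min_le_left _ _) ?_
    rw [le_div_iff₀ hsinpos]
    have : |Real.sin v| ≤ 1 := Real.abs_sin_le_one v
    linarith
  · refine le_trans (min_le_right _ _) ?_
    have hpi := Real.pi_gt_three
    have heq : |Real.sin v| = Real.sin |v| := abs_sin_eq (by linarith)
    have hsinabs : 0 < Real.sin |v| := by rwa [heq] at hsinpos
    have hbound : Real.sin |v| ≤ |v| * (1 - c ^ 2 / 20) := by
      have := sin_cubic_bound (abs_nonneg v) h2.le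
      have hmono : |v| * (1 - |v| ^ 2 / 20) ≤ |v| * (1 - c ^ 2 / 20) := by
        apply mul_le_mul_of_nonneg_left _ (abs_nonneg v)
        nlinarith
      linarith
    have h20 : 0 < 1 - c ^ 2 / 20 := by nlinarith
    rw [heq, div_le_div_iff₀ h20 hsinabs, one_mul]
    linarith [hbound]

lemma cos_ge_09 {v : ℝ} (h : |v| ≤ 1 / 10) : 0.9 ≤ Real.cos v := by
  have hid : Real.cos v = 1 - 2 * Real.sin (v / 2) ^ 2 := by
    have h1 := Real.cos_two_mul (v / 2)
    have h2 := Real.sin_sq_add_cos_sq (v / 2)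
    have h3 : 2 * (v / 2) = v := by ring
    rw [h3] at h1
    linarith
  have habs : |Real.sin (v / 2)| ≤ |v / 2| := Real.abs_sin_le_abs
  have hsq : Real.sin (v / 2) ^ 2 ≤ (v / 2) ^ 2 := by
    rw [← sq_abs (Real.sin (v / 2)), ← sq_abs (v / 2)]
    exact pow_le_pow_left₀ (abs_nonneg _) habs 2
  have hv2 : v ^ 2 ≤ 1 / 100 := by nlinarith [sq_abs v, abs_nonneg v]
  rw [hid]
  nlinarith

lemma exp_escape (t : ℝ) : t + 1 / 2 ≤ 0.9 * Real.exp t := by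
  rcases le_or_gt t 4 with h4 | h4
  · have h1 := Real.add_one_le_exp t
    nlinarith [Real.exp_pos t]
  · have h2 := Real.add_one_le_exp (t / 2)
    have hpos : (0:ℝ) ≤ t / 2 + 1 := by linarith
    have h3 : (t / 2 + 1) * (t / 2 + 1) ≤ Real.exp (t / 2) * Real.exp (t / 2) :=
      mul_le_mul h2 h2 hpos (Real.exp_pos _).le
    have h5 : Real.exp (t / 2) * Real.exp (t / 2) = Real.exp t := by
      rw [← Real.exp_add]; ring_nf
    rw [h5] at h3
    nlinarith

lemma abs_sin_ge {v : ℝ} (h : |v| ≤ Real.pi / 2) : 2 / Real.pi * |v| ≤ |Real.sin v| := by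
  have hpi := Real.pi_pos
  have heq : |Real.sin v| = Real.sin |v| := abs_sin_eq (by linarith)
  rw [heq]
  exact Real.mul_le_sin (abs_nonneg v) h

lemma sph_ge {A b : ℂ} (hA : ‖A‖ ≤ 1) (hb : 3 ≤ ‖b‖) : 1 / 2 < sphericalDist A b := by
  set B := ‖b‖ with hB
  have hA0 : 0 ≤ ‖A‖ := norm_nonneg _
  have hnum : 2 * (B - 1) ≤ 2 * dist A b := by
    have h1 : B - ‖A‖ ≤ ‖b - A‖ := by
      have := norm_sub_norm_le b A
      linarith
    rw [dist_eq_norm, ← norm_sub_rev]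
    linarith
  have hden : Real.sqrt (1 + ‖A‖ ^ 2) * Real.sqrt (1 + ‖b‖ ^ 2) ≤ 2 * B := by
    have h1 : Real.sqrt (1 + ‖A‖ ^ 2) ≤ Real.sqrt 2 := by
      apply Real.sqrt_le_sqrt; nlinarith
    have h2 : Real.sqrt (1 + ‖b‖ ^ 2) ≤ Real.sqrt 2 * B := by
      have hB2 : Real.sqrt 2 * B = Real.sqrt (2 * B ^ 2) := by
        rw [Real.sqrt_mul (by norm_num), Real.sqrt_sq (show (0:ℝ) ≤ B by linarith)]
      rw [hB2]
      apply Real.sqrt_le_sqrt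
      nlinarith
    calc Real.sqrt (1 + ‖A‖ ^ 2) * Real.sqrt (1 + ‖b‖ ^ 2)
        ≤ Real.sqrt 2 * (Real.sqrt 2 * B) := by
          apply mul_le_mul h1 h2 (Real.sqrt_nonneg _) (Real.sqrt_nonneg _)
      _ = 2 * B := by rw [← mul_assoc, Real.mul_self_sqrt (by norm_num)]
  have hdenpos : 0 < Real.sqrt (1 + ‖A‖ ^ 2) * Real.sqrt (1 + ‖b‖ ^ 2) := by
    apply mul_pos <;> · apply Real.sqrt_pos.2; nlinarith
  have hkey : 2 * (B - 1) / (2 * B) ≤ sphericalDist A b := by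
    unfold sphericalDist
    apply div_le_div₀ (by positivity) hnum hdenpos hden
  have : 1 / 2 < 2 * (B - 1) / (2 * B) := by
    rw [div_lt_div_iff₀ (by norm_num) (by linarith)]
    linarith
  linarith

lemma same_sign {s : Set ℂ} (hs : IsPreconnected s) {g : ℂ → ℝ} (hg : ContinuousOn g s)
    (h0 : ∀ w ∈ s, g w ≠ 0) {w₁ w₂ : ℂ} (h₁ : w₁ ∈ s) (h₂ : w₂ ∈ s) (hpos : 0 < g w₁) :
    0 < g w₂ := by
  by_contra hneg
  push_neg at hneg
  have hlt : g w₂ < 0 := lt_of_le_of_ne hneg (h0 w₂ h₂)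
  have hmem : (0:ℝ) ∈ Icc (g w₂) (g w₁) := ⟨hlt.le, hpos.le⟩
  obtain ⟨w, hw, hw0⟩ := hs.intermediate_value h₂ h₁ hg hmem
  exact h0 w hw hw0

/-- **Lemma A**: every ball contains a point some iterate of which under `exp` is real. -/
lemma exists_real_image (z₀ : ℂ) {r : ℝ} (hr : 0 < r) :
    ∃ m : ℕ, ∃ w ∈ ball z₀ r, (Complex.exp^[m] w).im = 0 := by
  by_contra hcon
  push_neg at hcon
  set a : ℕ → ℂ := fun j => Complex.exp^[j] z₀ with ha
  set x : ℕ → ℝ := fun j => (a j).re with hx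
  set y : ℕ → ℝ := fun j => (a j).im with hyy
  have hmem : z₀ ∈ ball z₀ r := mem_ball_self hr
  have hy : ∀ j, y j ≠ 0 := fun j => hcon j z₀ hmem
  have hrec : ∀ j, a (j + 1) = Complex.exp (a j) := fun j =>
    Function.iterate_succ_apply' Complex.exp j z₀
  have hyrec : ∀ j, y (j + 1) = Real.exp (x j) * Real.sin (y j) := by
    intro j
    show (a (j + 1)).im = _
    rw [hrec j, Complex.exp_im]
  have hxrec : ∀ j, x (j + 1) = Real.exp (x j) * Real.cos (y j) := by
    intro j
    show (a (j + 1)).re = _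
    rw [hrec j, Complex.exp_re]
  have hsin : ∀ j, Real.sin (y j) ≠ 0 := by
    intro j hzero
    exact hy (j + 1) (by rw [hyrec j, hzero, mul_zero])
  have hcont : ∀ m, ContinuousOn (fun w => (Complex.exp^[m] w).im) (ball z₀ r) :=
    fun m => (Complex.continuous_im.comp (diff_iter m).continuous).continuousOn
  have hconn : IsPreconnected (ball z₀ r) := (convex_ball z₀ r).isPreconnected
  -- Schwarz bound
  have hstar : ∀ m : ℕ,
      Real.exp (∑ j ∈ Finset.range (m + 1), x j) * r ≤ 2 * |y (m + 1)| := by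
    intro m
    have hD := hasDerivAt_iter_exp (m + 1) z₀
    have hnorm : ‖∏ j ∈ Finset.range (m + 1), Complex.exp (Complex.exp^[j] z₀)‖
        = Real.exp (∑ j ∈ Finset.range (m + 1), x j) := by
      rw [norm_prod, Real.exp_sum]
      apply Finset.prod_congr rfl
      intro j _
      rw [Complex.norm_exp]
    rcases (hy (m + 1)).lt_or_gt with hneg | hpos
    · -- negative imaginary part : use -exp^[m+1]
      have hFdiff : Differentiable ℂ (fun w => -(Complex.exp^[m + 1] w)) :=
        (diff_iter (m + 1)).neg
      have hmaps : ∀ w ∈ ball z₀ r, 0 < ((fun w => -(Complex.exp^[m + 1] w)) w).im := by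
        intro w hw
        have : 0 < -((Complex.exp^[m + 1] w).im) := by
          refine same_sign hconn ((hcont (m + 1)).neg) ?_ hmem hw ?_
          · intro u hu h0
            exact hcon (m + 1) u hu (by simpa [neg_eq_zero] using h0)
          · exact neg_pos.2 hneg
        simpa using this
      have hb := schwarz_halfplane hFdiff hr hmaps
      have hder : deriv (fun w => -(Complex.exp^[m + 1] w)) z₀
          = -(∏ j ∈ Finset.range (m + 1), Complex.exp (Complex.exp^[j] z₀)) := hD.neg.deriv
      rw [hder, norm_neg, hnorm] at hb
      have him : ((fun w => -(Complex.exp^[m + 1] w)) z₀).im = |y (m + 1)| := by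
        simp only [Complex.neg_im]
        rw [abs_of_neg hneg]
      rw [him] at hb
      exact hb
    · have hmaps : ∀ w ∈ ball z₀ r, 0 < (Complex.exp^[m + 1] w).im := by
        intro w hw
        exact same_sign hconn (hcont (m + 1)) (hcon (m + 1)) hmem hw hpos
      have hb := schwarz_halfplane (diff_iter (m + 1)) hr hmaps
      rw [hD.deriv, hnorm] at hb
      have him : (Complex.exp^[m + 1] z₀).im = |y (m + 1)| := (abs_of_pos hpos).symm
      rw [him] at hb
      exact hb
  -- multiplicative telescoping
  set p : ℕ → ℝ := fun j => |y j| / |Real.sin (y j)| with hp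
  set R : ℕ → ℝ := fun m => ∏ j ∈ Finset.range m, p (j + 1) with hR
  have hexpx : ∀ j, Real.exp (x j) = |y (j + 1)| / |Real.sin (y j)| := by
    intro j
    rw [eq_div_iff (abs_ne_zero.2 (hsin j)), hyrec j, abs_mul,
      abs_of_pos (Real.exp_pos _)]
  have hQ : ∀ m, Real.exp (∑ j ∈ Finset.range (m + 1), x j)
      = |y (m + 1)| / |Real.sin (y 0)| * R m := by
    intro m
    induction m with
    | zero => simp [hR, hexpx 0]
    | succ m ih =>
      rw [Finset.sum_range_succ, Real.exp_add, ih, hexpx (m + 1)]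
      have hRs : R (m + 1) = R m * p (m + 1) := Finset.prod_range_succ _ _
      rw [hRs, hp]
      ring
  have hs0 : 0 < |Real.sin (y 0)| := abs_pos.2 (hsin 0)
  have hRle : ∀ m, R m ≤ 2 * |Real.sin (y 0)| / r := by
    intro m
    have h1 := hstar m
    rw [hQ m] at h1
    have hyp : 0 < |y (m + 1)| := abs_pos.2 (hy (m + 1))
    rw [le_div_iff₀ hr]
    have h2 : |y (m + 1)| * (R m * r) ≤ 2 * |y (m + 1)| * |Real.sin (y 0)| := by
      rw [div_mul_eq_mul_div, div_mul_eq_mul_div, div_le_iff₀ hs0] at h1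
      nlinarith [h1]
    nlinarith [h2, hyp]
  have hppos : ∀ j, 0 < p j := fun j =>
    div_pos (abs_pos.2 (hy j)) (abs_pos.2 (hsin j))
  have hp1 : ∀ j, 1 ≤ p (j + 1) := by
    intro j
    rw [hp, le_div_iff₀ (abs_pos.2 (hsin (j + 1))), one_mul]
    exact Real.abs_sin_le_abs
  have hRpos : ∀ m, 0 < R m := fun m => Finset.prod_pos fun j _ => hppos (j + 1)
  have hRmono : Monotone R := by
    apply monotone_nat_of_le_succ
    intro m
    have : R (m + 1) = R m * p (m + 1) := Finset.prod_range_succ _ _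
    rw [this]
    nlinarith [hRpos m, hp1 m]
  have hbdd : BddAbove (Set.range R) := ⟨2 * |Real.sin (y 0)| / r, by
    rintro _ ⟨m, rfl⟩; exact hRle m⟩
  set L : ℝ := iSup R with hLdef
  have htend : Tendsto R atTop (𝓝 L) := tendsto_atTop_ciSup hRmono hbdd
  have hL1 : 1 ≤ L := by
    have : R 0 ≤ L := le_ciSup hbdd 0
    simpa [hR] using this
  have hLne : L ≠ 0 := by linarith
  have hptend : Tendsto (fun m => p (m + 1)) atTop (𝓝 1) := by
    have h1 : Tendsto (fun m => R (m + 1)) atTop (𝓝 L) :=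
      htend.comp (tendsto_add_atTop_nat 1)
    have h2 : Tendsto (fun m => R (m + 1) / R m) atTop (𝓝 (L / L)) := h1.div htend hLne
    rw [div_self hLne] at h2
    apply h2.congr
    intro m
    have hRs : R (m + 1) = R m * p (m + 1) := Finset.prod_range_succ _ _
    rw [hRs, mul_div_cancel_left₀ _ (hRpos m).ne']
  -- y j → 0
  have ysmall : ∀ c : ℝ, 0 < c → c ≤ 1 / 10 → ∃ J, ∀ j ≥ J, |y j| < c := by
    intro c hc hc'
    have hqc : (1 : ℝ) < min 2 (1 / (1 - c ^ 2 / 20)) := by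
      apply lt_min (by norm_num)
      rw [lt_div_iff₀ (by nlinarith)]
      nlinarith
    have hev : ∀ᶠ m in atTop, p (m + 1) < min 2 (1 / (1 - c ^ 2 / 20)) :=
      hptend.eventually_lt_const hqc
    obtain ⟨J₀, hJ₀⟩ := eventually_atTop.1 hev
    refine ⟨J₀ + 1, fun j hj => ?_⟩
    obtain ⟨k, rfl⟩ := Nat.exists_eq_add_of_le hj
    by_contra hge
    push_neg at hge
    have hge2 := ratio_ge (hsin (J₀ + 1 + k)) hc hc' hge
    have hm := hJ₀ (J₀ + k) (by omega)
    rw [show J₀ + k + 1 = J₀ + 1 + k by omega] at hm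
    exact absurd hm (not_lt.2 hge2)
  obtain ⟨J, hJ⟩ := ysmall (1 / 10) (by norm_num) le_rfl
  -- escape along the real direction
  have hstep : ∀ j, J ≤ j → x j + 1 / 2 ≤ x (j + 1) := by
    intro j hj
    have hcos : (0.9 : ℝ) ≤ Real.cos (y j) := cos_ge_09 (le_of_lt (hJ j hj))
    have h1 : 0.9 * Real.exp (x j) ≤ Real.exp (x j) * Real.cos (y j) := by
      nlinarith [Real.exp_pos (x j)]
    rw [hxrec j]
    linarith [exp_escape (x j)]
  have hgrow : ∀ k : ℕ, x J + k * (1 / 2) ≤ x (J + k) := by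
    intro k
    induction k with
    | zero => simp
    | succ k ih =>
      have h2 := hstep (J + k) (Nat.le_add_right _ _)
      rw [show J + (k + 1) = (J + k) + 1 by omega]
      push_cast
      linarith
  obtain ⟨K, hK⟩ := exists_nat_ge (2 * (2 - x J))
  have hxK : 2 ≤ x (J + K) := by
    have := hgrow K
    nlinarith
  have hx2 : ∀ k : ℕ, 2 ≤ x (J + K + k) := by
    intro k
    induction k with
    | zero => exact hxK
    | succ k ih =>
      have hs := hstep (J + K + k) (by omega)
      show 2 ≤ x (J + K + k + 1)
      linarith
  have hexp2 : (7 : ℝ) ≤ Real.exp 2 := by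
    have h1 : Real.exp 2 = Real.exp 1 * Real.exp 1 := by
      rw [← Real.exp_add]; norm_num
    nlinarith [Real.exp_one_gt_d9]
  have hpi315 := Real.pi_lt_d2
  have hpi3 := Real.pi_gt_three
  have hquad : ∀ k : ℕ, (4 : ℝ) ^ k * |y (J + K)| ≤ |y (J + K + k)| := by
    intro k
    induction k with
    | zero => simp
    | succ k ih =>
      have hjk : J ≤ J + K + k := by omega
      have hsmall := hJ (J + K + k) hjk
      have hsinge : 2 / Real.pi * |y (J + K + k)| ≤ |Real.sin (y (J + K + k))| :=
        abs_sin_ge (by nlinarith [hsmall])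
      have hE : Real.exp 2 ≤ Real.exp (x (J + K + k)) := Real.exp_le_exp.2 (hx2 k)
      have habs : |y (J + K + k + 1)| =
          Real.exp (x (J + K + k)) * |Real.sin (y (J + K + k))| := by
        rw [hyrec (J + K + k), abs_mul, abs_of_pos (Real.exp_pos _)]
      have hge4 : 4 * |y (J + K + k)| ≤ |y (J + K + k + 1)| := by
        rw [habs]
        have h1 : Real.exp (x (J + K + k)) * |Real.sin (y (J + K + k))|
            ≥ 7 * (2 / Real.pi * |y (J + K + k)|) := by
          apply mul_le_mul (by linarith) hsinge (by positivity)
            (by linarith [Real.exp_pos (x (J + K + k))])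
        have h2 : 4 * |y (J + K + k)| ≤ 7 * (2 / Real.pi * |y (J + K + k)|) := by
          rw [← mul_assoc]
          apply mul_le_mul_of_nonneg_right _ (abs_nonneg _)
          rw [show (7:ℝ) * (2 / Real.pi) = 14 / Real.pi by ring,
            le_div_iff₀ (by linarith : (0:ℝ) < Real.pi)]
          nlinarith
        linarith
      have h3 : ((4 : ℝ) ^ (k + 1)) * |y (J + K)| = 4 * ((4 : ℝ) ^ k * |y (J + K)|) := by
        ring
      rw [show J + K + (k + 1) = J + K + k + 1 by omega, h3]
      nlinarith [abs_nonneg (y (J + K))]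
  have hy0 : 0 < |y (J + K)| := abs_pos.2 (hy (J + K))
  obtain ⟨k, hk⟩ := pow_unbounded_of_one_lt ((1 / 10) / |y (J + K)|) (by norm_num : (1:ℝ) < 4)
  have h1 := hquad k
  have h2 := hJ (J + K + k) (by omega)
  rw [div_lt_iff₀ hy0] at hk
  nlinarith

/-- Pointwise equicontinuity of the family of iterates of `exp` at `x`. -/
def Equi (x : ℂ) : Prop :=
  ∀ ε > (0 : ℝ), ∃ δ > (0 : ℝ), ∀ y : ℂ, dist y x < δ →
    ∀ n : ℕ, sphericalDist (Complex.exp^[n] y) (Complex.exp^[n] x) < ε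

lemma iter_ofReal (c : ℝ) : ∀ j : ℕ, Complex.exp^[j] (c : ℂ) = ((Real.exp^[j] c : ℝ) : ℂ) := by
  intro j
  induction j with
  | zero => rfl
  | succ j ih =>
    rw [Function.iterate_succ_apply', Function.iterate_succ_apply', ih, Complex.ofReal_exp]

lemma iter_real_ge (c : ℝ) (hc : 0 ≤ c) : ∀ j : ℕ, c + j ≤ Real.exp^[j] c := by
  intro j
  induction j with
  | zero => simp
  | succ j ih =>
    rw [Function.iterate_succ_apply']
    have h1 := Real.add_one_le_exp (Real.exp^[j] c)
    push_cast
    linarith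

/-- **Lemma B**: the family of iterates of `exp` is not equicontinuous at any
nonnegative real point. -/
lemma not_equi_real (c : ℝ) (hc : 0 ≤ c) : ¬ Equi (c : ℂ) := by
  intro h
  obtain ⟨δ, hδ, hsep⟩ := h (1 / 2) (by norm_num)
  set δ' : ℝ := min δ 1 with hδ'def
  have hδ'pos : 0 < δ' := lt_min hδ one_pos
  have hδ'le1 : δ' ≤ 1 := min_le_right _ _
  have hδ'leδ : δ' ≤ δ := min_le_left _ _
  set d : ℕ → ℝ := fun j => Real.exp^[j] c with hd
  have hdrec : ∀ j, d (j + 1) = Real.exp (d j) := fun j =>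
    Function.iterate_succ_apply' Real.exp j c
  have hdge : ∀ j : ℕ, c + j ≤ d j := iter_real_ge c hc
  have hdpos : ∀ j : ℕ, 0 ≤ d j := by
    intro j
    have h1 := hdge j
    have hj : (0:ℝ) ≤ (j:ℝ) := Nat.cast_nonneg j
    linarith
  have hiter : ∀ j, Complex.exp^[j] (c : ℂ) = ((d j : ℝ) : ℂ) := iter_ofReal c
  have hpi := Real.pi_gt_three
  have hconn : IsPreconnected (ball (c:ℂ) δ') := (convex_ball _ _).isPreconnected
  have hcmem : (c : ℂ) ∈ ball (c:ℂ) δ' := mem_ball_self hδ'pos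
  -- main claim: some point of the ball has an iterate with |Im| in [π/2, π]
  have hband : ∃ y ∈ ball (c:ℂ) δ', ∃ k : ℕ,
      Real.pi / 2 ≤ |(Complex.exp^[k] y).im| ∧ |(Complex.exp^[k] y).im| ≤ Real.pi := by
    by_contra hno
    push_neg at hno
    have hsmall : ∀ k : ℕ, ∀ y ∈ ball (c:ℂ) δ', |(Complex.exp^[k] y).im| < Real.pi / 2 := by
      intro k y hy
      by_contra hge
      push_neg at hge
      have hgt : Real.pi < |(Complex.exp^[k] y).im| := hno y hy k hge
      have hg : ContinuousOn (fun w => (Complex.exp^[k] w).im) (ball (c:ℂ) δ') :=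
        (Complex.continuous_im.comp (diff_iter k).continuous).continuousOn
      have hgc : (Complex.exp^[k] (c:ℂ)).im = 0 := by rw [hiter k]; simp
      rcases lt_abs.1 hgt with hcase | hcase
      · have hmem34 : (3 * Real.pi / 4 : ℝ) ∈
            Icc ((Complex.exp^[k] (c:ℂ)).im) ((Complex.exp^[k] y).im) := by
          rw [hgc]; constructor <;> nlinarith
        obtain ⟨w, hw, hweq⟩ := hconn.intermediate_value hcmem hy hg hmem34
        have hweq' : (Complex.exp^[k] w).im = 3 * Real.pi / 4 := hweq
        have h2 := hno w hw k
        rw [hweq'] at h2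
        have habs : |(3 * Real.pi / 4 : ℝ)| = 3 * Real.pi / 4 := abs_of_pos (by nlinarith)
        rw [habs] at h2
        have := h2 (by nlinarith)
        nlinarith
      · have hmem34 : (-(3 * Real.pi / 4) : ℝ) ∈
            Icc ((Complex.exp^[k] y).im) ((Complex.exp^[k] (c:ℂ)).im) := by
          rw [hgc]; constructor <;> nlinarith
        obtain ⟨w, hw, hweq⟩ := hconn.intermediate_value hy hcmem hg hmem34
        have hweq' : (Complex.exp^[k] w).im = -(3 * Real.pi / 4) := hweq
        have h2 := hno w hw k
        rw [hweq'] at h2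
        have habs : |(-(3 * Real.pi / 4) : ℝ)| = 3 * Real.pi / 4 := by
          rw [abs_neg]; exact abs_of_pos (by nlinarith)
        rw [habs] at h2
        have := h2 (by nlinarith)
        nlinarith
    have hRepos : ∀ m : ℕ, ∀ w ∈ ball (c:ℂ) δ', 0 < (Complex.exp^[m + 1] w).re := by
      intro m w hw
      rw [Function.iterate_succ_apply', Complex.exp_re]
      have hV := hsmall m w hw
      have hcos : 0 < Real.cos ((Complex.exp^[m] w).im) := by
        apply Real.cos_pos_of_mem_Ioo
        constructor
        · linarith [(abs_lt.1 hV).1]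
        · linarith [(abs_lt.1 hV).2]
      positivity
    -- Schwarz bound forces a contradiction against the real orbit's growth
    have hbound : ∀ m : ℕ, Real.exp (∑ j ∈ Finset.range (m + 1), d j) * δ' ≤
        2 * Real.exp (d m) := by
      intro m
      set F : ℂ → ℂ := fun w => Complex.I * Complex.exp^[m + 1] w with hF
      have hFdiff : Differentiable ℂ F := (diff_iter (m + 1)).const_mul Complex.I
      have hmaps : ∀ w ∈ ball (c:ℂ) δ', 0 < (F w).im := by
        intro w hw
        have h1 : (F w).im = (Complex.exp^[m + 1] w).re := by
          simp [hF, Complex.mul_im]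
        rw [h1]
        exact hRepos m w hw
      have hb := schwarz_halfplane hFdiff hδ'pos hmaps
      have hD : HasDerivAt F (Complex.I *
          (∏ j ∈ Finset.range (m + 1), Complex.exp (Complex.exp^[j] (c:ℂ)))) (c:ℂ) :=
        (hasDerivAt_iter_exp (m + 1) (c:ℂ)).const_mul Complex.I
      rw [hD.deriv] at hb
      have hnorm : ‖Complex.I *
          (∏ j ∈ Finset.range (m + 1), Complex.exp (Complex.exp^[j] (c:ℂ)))‖
          = Real.exp (∑ j ∈ Finset.range (m + 1), d j) := by
        rw [norm_mul, norm_prod, Real.exp_sum]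
        have h1 : ∀ j ∈ Finset.range (m + 1),
            ‖Complex.exp (Complex.exp^[j] (c:ℂ))‖ = Real.exp (d j) := by
          intro j _
          rw [Complex.norm_exp, hiter j]
          simp
        rw [Finset.prod_congr rfl h1]
        simp
      rw [hnorm] at hb
      have him : (F (c:ℂ)).im = Real.exp (d m) := by
        have h1 : (F (c:ℂ)).im = (Complex.exp^[m + 1] (c:ℂ)).re := by
          simp [hF, Complex.mul_im]
        rw [h1, hiter (m + 1), Complex.ofReal_re, hdrec m]
      rw [him] at hb
      exact hb
    obtain ⟨M, hM⟩ := exists_nat_gt (2 / δ')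
    have h1 := hbound (M + 1)
    have hsum : d M + d (M + 1) ≤ ∑ j ∈ Finset.range (M + 2), d j := by
      rw [Finset.sum_range_succ]
      have h3 : d M ≤ ∑ j ∈ Finset.range (M + 1), d j :=
        Finset.single_le_sum (f := d) (fun j _ => hdpos j) (Finset.self_mem_range_succ M)
      linarith
    have h4 : Real.exp (d M + d (M + 1)) * δ' ≤ 2 * Real.exp (d (M + 1)) := by
      calc Real.exp (d M + d (M + 1)) * δ'
          ≤ Real.exp (∑ j ∈ Finset.range (M + 2), d j) * δ' :=
            mul_le_mul_of_nonneg_right (Real.exp_le_exp.2 hsum) hδ'pos.le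
        _ ≤ 2 * Real.exp (d (M + 1)) := h1
    rw [Real.exp_add] at h4
    have hEpos := Real.exp_pos (d (M + 1))
    have h5 : Real.exp (d M) * δ' ≤ 2 := by
      have h6 : (Real.exp (d M) * δ') * Real.exp (d (M + 1))
          ≤ 2 * Real.exp (d (M + 1)) := by nlinarith
      exact le_of_mul_le_mul_right h6 hEpos
    have h7 : (M : ℝ) + 1 ≤ Real.exp (d M) := by
      have h8 := hdge M
      have h9 := Real.add_one_le_exp (d M)
      linarith
    rw [div_lt_iff₀ hδ'pos] at hM
    nlinarith [hδ'pos]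
  obtain ⟨y, hy, k, hb1, hb2⟩ := hband
  -- k cannot be 0
  have hk1 : 1 ≤ k := by
    by_contra hk0
    push_neg at hk0
    interval_cases k
    have h1 : |y.im| ≤ dist y (c:ℂ) := by
      rw [Complex.dist_eq]
      have h2 : y.im = (y - (c:ℂ)).im := by simp
      rw [h2]
      exact Complex.abs_im_le_norm _
    have h3 : dist y (c:ℂ) < δ' := mem_ball.1 hy
    simp only [Function.iterate_zero_apply] at hb1
    nlinarith
  -- the (k+2)-nd iterate of y is in the closed unit disk
  have hA : ‖Complex.exp^[k + 2] y‖ ≤ 1 := by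
    have h1 : Complex.exp^[k + 2] y = Complex.exp (Complex.exp^[k + 1] y) :=
      Function.iterate_succ_apply' _ _ _
    have h2 : Complex.exp^[k + 1] y = Complex.exp (Complex.exp^[k] y) :=
      Function.iterate_succ_apply' _ _ _
    have hre : (Complex.exp^[k + 1] y).re ≤ 0 := by
      rw [h2, Complex.exp_re]
      have hcos : Real.cos ((Complex.exp^[k] y).im) ≤ 0 := by
        rw [← Real.cos_abs]
        exact Real.cos_nonpos_of_pi_div_two_le_of_le hb1 (by linarith)
      have := Real.exp_pos ((Complex.exp^[k] y).re)
      nlinarith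
    rw [h1, Complex.norm_exp]
    calc Real.exp ((Complex.exp^[k + 1] y).re) ≤ Real.exp 0 := Real.exp_le_exp.2 hre
      _ = 1 := Real.exp_zero
  -- while the real orbit is far out
  have hB : 3 ≤ ‖Complex.exp^[k + 2] (c:ℂ)‖ := by
    rw [hiter (k + 2)]
    have h1 := hdge (k + 2)
    have h2 : (3:ℝ) ≤ c + (k + 2 : ℕ) := by
      push_cast
      have : (1:ℝ) ≤ (k:ℝ) := by exact_mod_cast hk1
      linarith
    rw [Complex.norm_real, Real.norm_eq_abs, abs_of_nonneg (hdpos (k + 2))]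
    linarith
  have hlow := sph_ge hA hB
  have hup := hsep y (lt_of_lt_of_le (mem_ball.1 hy) hδ'leδ) (k + 2)
  linarith

/-- Equicontinuity at `x` transfers to `exp x`. -/
lemma equi_exp {x : ℂ} (h : Equi x) : Equi (Complex.exp x) := by
  intro ε hε
  obtain ⟨δ, hδ, hsep⟩ := h ε hε
  have hmap : Filter.map Complex.exp (𝓝 x) = 𝓝 (Complex.exp x) :=
    (Complex.hasStrictDerivAt_exp x).map_nhds_eq (Complex.exp_ne_zero x)
  have himg : Complex.exp '' ball x δ ∈ 𝓝 (Complex.exp x) := by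
    rw [← hmap]
    exact image_mem_map (ball_mem_nhds x hδ)
  obtain ⟨δ₂, hδ₂, hsub⟩ := Metric.mem_nhds_iff.1 himg
  refine ⟨δ₂, hδ₂, fun y' hy' n => ?_⟩
  obtain ⟨y, hy, rfl⟩ := hsub (mem_ball.2 hy')
  have h1 := hsep y (mem_ball.1 hy) (n + 1)
  rwa [Function.iterate_succ_apply] at h1

lemma equi_iter {x : ℂ} (h : Equi x) : ∀ m : ℕ, Equi (Complex.exp^[m] x) := by
  intro m
  induction m with
  | zero => exact h
  | succ m ih =>
    rw [Function.iterate_succ_apply']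
    exact equi_exp ih

end MisiurewiczAux

/-- **Theorem (Statement 4, Misiurewicz).** The Julia set of `exp` is all of `ℂ`:
the Fatou set of the exponential map is empty. -/
theorem fatou_exp_empty : FatouSet Complex.exp = ∅ := by
  rw [Set.eq_empty_iff_forall_notMem]
  intro z hz
  obtain ⟨N, hNopen, hzN, hP⟩ := hz
  obtain ⟨r, hrpos, hball⟩ := Metric.isOpen_iff.1 hNopen z hzN
  obtain ⟨m, w, hw, him⟩ := MisiurewiczAux.exists_real_image z hrpos
  have hwN : w ∈ N := hball hw
  have hEw : MisiurewiczAux.Equi w := by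
    intro ε hε
    obtain ⟨δ, hδ, hsep⟩ := hP w hwN ε hε
    obtain ⟨ρ, hρ, hρball⟩ := Metric.isOpen_iff.1 hNopen w hwN
    refine ⟨min δ ρ, lt_min hδ hρ, fun y hy n => ?_⟩
    exact hsep y (hρball (mem_ball.2 (lt_of_lt_of_le hy (min_le_right _ _))))
      (lt_of_lt_of_le hy (min_le_left _ _)) n
  have hEc := MisiurewiczAux.equi_iter hEw (m + 1)
  have hreal : Complex.exp^[m + 1] w
      = ((Real.exp ((Complex.exp^[m] w).re) : ℝ) : ℂ) := by
    rw [Function.iterate_succ_apply']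
    have h1 : Complex.exp^[m] w = (((Complex.exp^[m] w).re : ℝ) : ℂ) := by
      apply Complex.ext
      · simp
      · simp [him]
    rw [h1, ← Complex.ofReal_exp]
    simp
  rw [hreal] at hEc
  exact MisiurewiczAux.not_equi_real _ (Real.exp_pos _).le hEc
end

section
/- Let f ∈ B_ℝ satisfy the sector condition at σ∞ for every σ ∈ Σ₀(f), and let p be a nonconstant real polynomial. Then the entire function g := f∘p (which again belongs to B_ℝ) satisfies the sector condition at σ∞ for every σ ∈ Σ₀(g). -/
/-!
Formalization of: "Absence of wandering domains for functions in class B whose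
singular values escape uniformly, under a thickness condition along an invariant set A."
-/

open Set Metric Filter Topology

/-- `f` satisfies the (real) sector condition at `σ∞`: for all sufficiently large `R > 0`
there are `ϑ > 0` and `R' > 0` with `|f(σx + y)| > R` whenever `x > R'` and `|y| < ϑx`. -/
def SectorCondAt (f : ℂ → ℂ) (σ : ℝ) : Prop :=
  ∃ R₀ > (0 : ℝ), ∀ R ≥ R₀, ∃ ϑ > (0 : ℝ), ∃ R' > (0 : ℝ), ∀ x : ℝ, R' < x →
    ∀ y : ℂ, ‖y‖ < ϑ * x → R < ‖f ((σ * x : ℝ) + y)‖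

/-- `σ ∈ Σ₀(f)`: `|f(σx)| → ∞` as `x → +∞` along the reals. -/
def MemSigmaZero (f : ℂ → ℂ) (σ : ℝ) : Prop :=
  Tendsto (fun x : ℝ => ‖f ((σ * x : ℝ) : ℂ)‖) atTop atTop

private lemma norm_pow_sub_pow_le' (a b : ℂ) (M : ℝ) (n : ℕ)
    (ha : ‖a‖ ≤ M) (hb : ‖b‖ ≤ M) :
    ‖a ^ n - b ^ n‖ ≤ n * M ^ (n - 1) * ‖a - b‖ := by
  have hM0 : 0 ≤ M := le_trans (norm_nonneg a) ha
  rw [← geom_sum₂_mul, norm_mul]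
  have hsum : ‖∑ i ∈ Finset.range n, a ^ i * b ^ (n - 1 - i)‖ ≤ n * M ^ (n - 1) := by
    calc ‖∑ i ∈ Finset.range n, a ^ i * b ^ (n - 1 - i)‖
        ≤ ∑ i ∈ Finset.range n, ‖a ^ i * b ^ (n - 1 - i)‖ := norm_sum_le _ _
      _ ≤ ∑ _i ∈ Finset.range n, M ^ (n - 1) := by
          refine Finset.sum_le_sum fun i hi => ?_
          rw [norm_mul, norm_pow, norm_pow]
          have h1 : ‖a‖ ^ i * ‖b‖ ^ (n - 1 - i) ≤ M ^ i * M ^ (n - 1 - i) := by gcongr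
          refine h1.trans ?_
          rw [← pow_add]
          have : i + (n - 1 - i) = n - 1 := by
            have hi' : i ≤ n - 1 := Nat.le_sub_one_of_lt (Finset.mem_range.mp hi)
            omega
          rw [this]
      _ = n * M ^ (n - 1) := by
          rw [Finset.sum_const, Finset.card_range, nsmul_eq_mul]
  exact mul_le_mul_of_nonneg_right hsum (norm_nonneg _)

private lemma poly_diff_bound (P : Polynomial ℂ) :
    ∃ C : ℝ, 0 ≤ C ∧ ∀ x : ℝ, 1 ≤ x → ∀ u v : ℂ, ‖u‖ ≤ x → ‖v‖ ≤ x →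
      ‖P.eval u - P.eval v‖ ≤ C * x ^ (P.natDegree - 1) * ‖u - v‖ := by
  set D := P.natDegree with hD
  refine ⟨∑ k ∈ Finset.range (D + 1), ‖P.coeff k‖ * k,
    Finset.sum_nonneg fun k _ => by positivity, ?_⟩
  intro x hx u v hu hv
  have hx0 : (0:ℝ) ≤ x := le_trans zero_le_one hx
  have heval : P.eval u - P.eval v
      = ∑ k ∈ Finset.range (D + 1), P.coeff k * (u ^ k - v ^ k) := by
    rw [Polynomial.eval_eq_sum_range, Polynomial.eval_eq_sum_range, ← Finset.sum_sub_distrib]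
    exact Finset.sum_congr rfl fun k _ => by ring
  rw [heval]
  calc ‖∑ k ∈ Finset.range (D + 1), P.coeff k * (u ^ k - v ^ k)‖
      ≤ ∑ k ∈ Finset.range (D + 1), ‖P.coeff k * (u ^ k - v ^ k)‖ := norm_sum_le _ _
    _ ≤ ∑ k ∈ Finset.range (D + 1), (‖P.coeff k‖ * k) * (x ^ (D - 1) * ‖u - v‖) := by
        refine Finset.sum_le_sum fun k hk => ?_
        rw [norm_mul]
        have h1 : ‖u ^ k - v ^ k‖ ≤ k * x ^ (k - 1) * ‖u - v‖ :=
          norm_pow_sub_pow_le' u v x k hu hv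
        have h2 : (k:ℝ) * x ^ (k - 1) * ‖u - v‖ ≤ k * x ^ (D - 1) * ‖u - v‖ := by
          have hkD : k - 1 ≤ D - 1 := by
            have : k ≤ D := Nat.lt_succ_iff.mp (Finset.mem_range.mp hk)
            omega
          gcongr
        calc ‖P.coeff k‖ * ‖u ^ k - v ^ k‖
            ≤ ‖P.coeff k‖ * (k * x ^ (D - 1) * ‖u - v‖) :=
              mul_le_mul_of_nonneg_left (h1.trans h2) (norm_nonneg _)
          _ = (‖P.coeff k‖ * k) * (x ^ (D - 1) * ‖u - v‖) := by ring
    _ = (∑ k ∈ Finset.range (D + 1), ‖P.coeff k‖ * k) * x ^ (D - 1) * ‖u - v‖ := by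
        rw [← Finset.sum_mul]; ring

/-- **Theorem (Statement 13).** If `f ∈ B_ℝ` satisfies the sector condition at `σ∞` for every
`σ ∈ Σ₀(f)`, and `p` is a nonconstant real polynomial, then `g = f ∘ p` satisfies the sector
condition at `σ∞` for every `σ ∈ Σ₀(g)`. -/
theorem sector_condition_comp_polynomial
    (f : ℂ → ℂ) (S : Set ℂ)
    (hf : TranscendentalEntire f)
    (hS : IsSingularValueSet f S)
    (hSbdd : Bornology.IsBounded S)
    (hreal : f '' {z : ℂ | z.im = 0} ⊆ {z : ℂ | z.im = 0})
    (hfsector : ∀ σ : ℝ, (σ = 1 ∨ σ = -1) → MemSigmaZero f σ → SectorCondAt f σ)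
    (p : Polynomial ℝ) (hp : 0 < p.degree)
    (g : ℂ → ℂ) (hg : ∀ z : ℂ, g z = f (Polynomial.aeval z p)) :
    ∀ σ : ℝ, (σ = 1 ∨ σ = -1) → MemSigmaZero g σ → SectorCondAt g σ := by
  intro σ hσ hgσ
  unfold MemSigmaZero at hgσ
  have hσne : σ ≠ 0 := by rcases hσ with h | h <;> simp [h]
  have hσ2 : σ * σ = 1 := by rcases hσ with h | h <;> simp [h]
  set q : Polynomial ℝ := p.comp (Polynomial.C σ * Polynomial.X) with hqdef
  have hqd : q.natDegree = p.natDegree := by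
    rw [hqdef, Polynomial.natDegree_comp, Polynomial.natDegree_C_mul_X σ hσne, mul_one]
  have hpd : 0 < p.natDegree := Polynomial.natDegree_pos_iff_degree_pos.mpr hp
  have hqd0 : 0 < q.natDegree := hqd ▸ hpd
  have hqdeg : 0 < q.degree := Polynomial.natDegree_pos_iff_degree_pos.mp hqd0
  set τ : ℝ := if 0 < q.leadingCoeff then 1 else -1 with hτdef
  have hτ : τ = 1 ∨ τ = -1 := by rw [hτdef]; split <;> simp
  have hτ2 : τ * τ = 1 := by rcases hτ with h | h <;> simp [h]
  have htend : Tendsto (fun x => τ * q.eval x) atTop atTop := by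
    by_cases h : 0 < q.leadingCoeff
    · simp only [hτdef, if_pos h, one_mul]
      exact Polynomial.tendsto_atTop_of_leadingCoeff_nonneg q hqdeg h.le
    · have hlt : q.leadingCoeff ≤ 0 := not_lt.mp h
      have := Polynomial.tendsto_atBot_of_leadingCoeff_nonpos q hqdeg hlt
      simp only [hτdef, if_neg h, neg_one_mul]
      exact tendsto_neg_atBot_atTop.comp this
  set QC : Polynomial ℂ := q.map (algebraMap ℝ ℂ) with hQCdef
  have hQCd : QC.natDegree = q.natDegree := Polynomial.natDegree_map (algebraMap ℝ ℂ)
  have hQCreal : ∀ x : ℝ, QC.eval (x:ℂ) = ((q.eval x : ℝ) : ℂ) := by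
    intro x
    rw [hQCdef, Polynomial.eval_map]
    exact Polynomial.eval₂_at_apply (algebraMap ℝ ℂ) x
  have haQ : ∀ z : ℂ, Polynomial.aeval z q = QC.eval z := fun z => by
    rw [hQCdef, Polynomial.aeval_def, Polynomial.eval_map]
  have hσc : (σ:ℂ) * (σ:ℂ) = 1 := by exact_mod_cast hσ2
  have ha2 : ∀ z : ℂ, Polynomial.aeval z q = Polynomial.aeval ((σ:ℂ) * z) p := by
    intro z
    rw [hqdef, Polynomial.aeval_comp]
    congr 1
    simp
  have hkey : ∀ (x : ℝ) (y : ℂ),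
      (Polynomial.aeval (((σ * x : ℝ) : ℂ) + y)) p = QC.eval ((x:ℂ) + (σ:ℂ) * y) := by
    intro x y
    have harg : ((σ * x : ℝ) : ℂ) + y = (σ:ℂ) * ((x:ℂ) + (σ:ℂ) * y) := by
      push_cast
      linear_combination -y * hσc
    rw [← haQ, ha2, ← harg]
  have hlow : ∀ᶠ x in atTop, |q.leadingCoeff| / 2 * x ^ q.natDegree ≤ τ * q.eval x := by
    have hE := (Polynomial.isEquivalent_atTop_lead q).isLittleO
    have h2 := (Asymptotics.isLittleO_iff.mp hE) (c := 1/2) (by norm_num)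
    have hpos : ∀ᶠ x : ℝ in atTop, 0 < τ * q.eval x := htend.eventually_gt_atTop 0
    filter_upwards [h2, hpos, eventually_ge_atTop (0:ℝ)] with x hx hxpos hx0
    have habs : |q.eval x| = τ * q.eval x := by
      rcases hτ with h | h <;> rw [h] at hxpos ⊢
      · rw [one_mul] at hxpos ⊢; exact abs_of_pos hxpos
      · rw [neg_one_mul] at hxpos ⊢
        exact abs_of_neg (by linarith)
    simp only [Pi.sub_apply, Real.norm_eq_abs] at hx
    have hv : |q.leadingCoeff * x ^ q.natDegree| = |q.leadingCoeff| * x ^ q.natDegree := by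
      rw [abs_mul, abs_pow, abs_of_nonneg hx0]
    have h3 : |q.leadingCoeff * x ^ q.natDegree| - |q.eval x|
        ≤ |q.eval x - q.leadingCoeff * x ^ q.natDegree| := by
      rw [abs_sub_comm]; exact abs_sub_abs_le_abs_sub _ _
    rw [hv] at hx h3
    rw [← habs]
    nlinarith [abs_nonneg (q.eval x)]
  have hgq : ∀ x : ℝ, g ((σ * x : ℝ) : ℂ) = f ((q.eval x : ℝ) : ℂ) := by
    intro x
    rw [hg]
    congr 1
    rw [show ((σ * x : ℝ) : ℂ) = (σ:ℂ) * (x:ℂ) by push_cast; ring, ← ha2, haQ, hQCreal]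
  have hτmem : MemSigmaZero f τ := by
    unfold MemSigmaZero
    have hgσ' : Tendsto (fun x : ℝ => ‖f ((q.eval x : ℝ) : ℂ)‖) atTop atTop := by
      refine hgσ.congr fun x => ?_
      rw [hgq]
    rw [Filter.tendsto_atTop] at hgσ' ⊢
    intro M
    obtain ⟨B, hB⟩ := eventually_atTop.mp (hgσ' M)
    have hu : Continuous fun x : ℝ => τ * q.eval x := continuous_const.mul q.continuous
    filter_upwards [eventually_ge_atTop (τ * q.eval B)] with t ht
    obtain ⟨X, hXt, hXB⟩ := ((htend.eventually (eventually_ge_atTop t)).and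
      (eventually_ge_atTop B)).exists
    have hIcc : t ∈ Icc (τ * q.eval B) (τ * q.eval X) := ⟨ht, hXt⟩
    obtain ⟨x, hxmem, hxt⟩ := intermediate_value_Icc hXB hu.continuousOn hIcc
    simp only [] at hxt
    have hqx : q.eval x = τ * t := by
      have : τ * (τ * q.eval x) = τ * t := by rw [hxt]
      rwa [← mul_assoc, hτ2, one_mul] at this
    have := hB x hxmem.1
    rwa [hqx] at this
  obtain ⟨R₀, hR₀, hfs⟩ := hfsector τ hτ hτmem
  refine ⟨R₀, hR₀, ?_⟩
  intro R hR
  obtain ⟨ϑf, hϑf, R'f, hR'f, hfR⟩ := hfs R hR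
  obtain ⟨C, hC0, hCb⟩ := poly_diff_bound QC
  set d : ℕ := q.natDegree with hddef
  set CC : ℝ := C * 2 ^ (d - 1) with hCCdef
  have hCC0 : 0 ≤ CC := by positivity
  set c : ℝ := |q.leadingCoeff| / 2 with hcdef
  have hq0 : q ≠ 0 := fun h => by simp [h] at hqdeg
  have hc : 0 < c := by
    have : q.leadingCoeff ≠ 0 := Polynomial.leadingCoeff_ne_zero.mpr hq0
    rw [hcdef]; positivity
  set ϑ : ℝ := min (c * ϑf / (CC + 1)) 1 with hϑdef
  have hϑpos : 0 < ϑ := by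
    rw [hϑdef]
    refine lt_min ?_ one_pos
    positivity
  have hϑ1 : ϑ ≤ 1 := min_le_right _ _
  obtain ⟨x₁, hx₁⟩ := eventually_atTop.mp hlow
  obtain ⟨x₂, hx₂⟩ := eventually_atTop.mp (htend.eventually_ge_atTop (R'f + 1))
  refine ⟨ϑ, hϑpos, max (max x₁ x₂) 1, lt_of_lt_of_le one_pos (le_max_right _ _), ?_⟩
  intro x hx y hy
  have hx1 : (1:ℝ) ≤ x := le_of_lt (lt_of_le_of_lt (le_max_right _ _) hx)
  have hx0 : (0:ℝ) < x := lt_of_lt_of_le one_pos hx1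
  have hxx₁ : x₁ ≤ x := le_of_lt (lt_of_le_of_lt ((le_max_left _ _).trans (le_max_left _ _)) hx)
  have hxx₂ : x₂ ≤ x := le_of_lt (lt_of_le_of_lt ((le_max_right _ _).trans (le_max_left _ _)) hx)
  set X : ℝ := τ * q.eval x with hXdef
  have hXlow : c * x ^ d ≤ X := hx₁ x hxx₁
  have hXR' : R'f < X := lt_of_lt_of_le (lt_add_of_pos_right _ one_pos) (hx₂ x hxx₂)
  set y' : ℂ := (σ:ℂ) * y with hy'def
  have hy'norm : ‖y'‖ = ‖y‖ := by
    rw [hy'def, norm_mul, Complex.norm_real, Real.norm_eq_abs]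
    rcases hσ with h | h <;> simp [h]
  have hyx : ‖y‖ < x := lt_of_lt_of_le hy (by nlinarith)
  set Y : ℂ := QC.eval ((x:ℂ) + y') - QC.eval (x:ℂ) with hYdef
  have hd1 : x ^ (d - 1) * x = x ^ d := by
    rw [← pow_succ]
    congr 1
    omega
  have hYbound : ‖Y‖ ≤ CC * x ^ (d - 1) * ‖y‖ := by
    have hnx : ‖((x:ℝ):ℂ)‖ ≤ 2 * x := by
      rw [Complex.norm_real, Real.norm_eq_abs, abs_of_pos hx0]; linarith
    have hny : ‖(x:ℂ) + y'‖ ≤ 2 * x := by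
      refine (norm_add_le _ _).trans ?_
      rw [Complex.norm_real, Real.norm_eq_abs, abs_of_pos hx0, hy'norm]
      linarith
    have h2x : (1:ℝ) ≤ 2 * x := by linarith
    have hb := hCb (2 * x) h2x ((x:ℂ) + y') (x:ℂ) hny hnx
    rw [add_sub_cancel_left, hQCd] at hb
    calc ‖Y‖ ≤ C * (2 * x) ^ (d - 1) * ‖y'‖ := hb
      _ = CC * x ^ (d - 1) * ‖y‖ := by rw [hy'norm, hCCdef, mul_pow]; ring
  have hYfinal : ‖Y‖ < ϑf * X := by
    have h3 : (CC + 1) * x ^ (d - 1) * ‖y‖ < (CC + 1) * x ^ (d - 1) * (ϑ * x) := by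
      apply mul_lt_mul_of_pos_left hy
      positivity
    have hϑle : ϑ ≤ c * ϑf / (CC + 1) := min_le_left _ _
    have h5 : (CC + 1) * ϑ ≤ c * ϑf := by
      rw [mul_comm]
      rw [div_eq_mul_inv] at hϑle
      calc ϑ * (CC + 1) ≤ (c * ϑf * (CC + 1)⁻¹) * (CC + 1) := by
            apply mul_le_mul_of_nonneg_right hϑle
            positivity
        _ = c * ϑf := by field_simp
    have h4 : (CC + 1) * x ^ (d - 1) * (ϑ * x) ≤ ϑf * X := by
      calc (CC + 1) * x ^ (d - 1) * (ϑ * x) = ((CC + 1) * ϑ) * (x ^ (d - 1) * x) := by ring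
        _ ≤ (c * ϑf) * x ^ d := by
            rw [hd1]
            apply mul_le_mul_of_nonneg_right h5
            positivity
        _ = ϑf * (c * x ^ d) := by ring
        _ ≤ ϑf * X := mul_le_mul_of_nonneg_left hXlow hϑf.le
    have h2 : ‖Y‖ ≤ (CC + 1) * x ^ (d - 1) * ‖y‖ := by
      refine hYbound.trans ?_
      apply mul_le_mul_of_nonneg_right _ (norm_nonneg y)
      apply mul_le_mul_of_nonneg_right _ (by positivity)
      linarith
    linarith
  have happ := hfR X hXR' Y hYfinal
  have hXq : τ * X = q.eval x := by rw [hXdef, ← mul_assoc, hτ2, one_mul]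
  have hsplit : ((τ * X : ℝ) : ℂ) + Y = QC.eval ((x:ℂ) + y') := by
    rw [hXq, hYdef, ← hQCreal x]
    ring
  rw [hg, hkey x y, ← hy'def, ← hsplit]
  exact happ
end
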